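/- arXiv:1507.07522 — 2 statements merged into one kernel-verified Lean document; each statement's English description precedes it below -/
import Mathlib

section
/- Let 0<p<1. There exist a function f∈L_p, a function g∈L_p, a sequence of trigonometric polynomials T_n∈𝒯_n (n∈ℕ), and a constant C_f>0 such that ‖f−T_n‖_p → 0 and ‖g−T_n'‖_p → 0 as n→∞, yet ‖f−T_n‖_{H_p^{1,1}} ≥ C_f for all sufficiently large n. -/
open MeasureTheory Real Filter
open scoped ENNReal NNReal Topology

noncomputable section

/-- The (quasi-)norm of `L_p(𝕋)`, `0 < p ≤ ∞`, for `2π`-periodic functions. -/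
def LpNorm (p : ℝ≥0∞) (f : ℝ → ℂ) : ℝ :=
  if p = ⊤ then sSup (Set.range fun x => ‖f x‖)
  else ((2 * π)⁻¹ * ∫ x in (0:ℝ)..(2 * π), ‖f x‖ ^ p.toReal) ^ (p.toReal)⁻¹

/-- Membership in `L_p(𝕋)`: `2π`-periodic, and continuous (if `p = ∞`) or
measurable with `|f|^p` integrable over a period (if `p < ∞`). -/
def MemLp' (p : ℝ≥0∞) (f : ℝ → ℂ) : Prop :=
  Function.Periodic f (2 * π) ∧
    (if p = ⊤ then Continuous f
     else Measurable f ∧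
       IntervalIntegrable (fun x => ‖f x‖ ^ p.toReal) volume 0 (2 * π))

/-- The `r`-th forward difference `Δ_h^r f`. -/
def delta (h : ℝ) (r : ℕ) (f : ℝ → ℂ) : ℝ → ℂ :=
  fun x => ∑ ν ∈ Finset.range (r + 1), (-1 : ℂ) ^ ν * (r.choose ν : ℂ) * f (x + (ν : ℝ) * h)

/-- The modulus of smoothness `ω_k(f,t)_p = sup_{0<h≤t} ‖Δ_h^k f‖_p`. -/
def omega' (p : ℝ≥0∞) (k : ℕ) (f : ℝ → ℂ) (t : ℝ) : ℝ :=
  ⨆ h : {h : ℝ // 0 < h ∧ h ≤ t}, LpNorm p (delta h.1 k f)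

/-- The Hölder seminorm `|f|_{H_p^{r,α}} = sup_{h>0} h^{-α} ‖Δ_h^r f‖_p`. -/
def holderSemi (p : ℝ≥0∞) (r : ℕ) (α : ℝ) (f : ℝ → ℂ) : ℝ :=
  ⨆ h : {h : ℝ // 0 < h}, LpNorm p (delta h.1 r f) / h.1 ^ α

/-- The Hölder norm `‖f‖_{H_p^{r,α}}`. -/
def holderNorm (p : ℝ≥0∞) (r : ℕ) (α : ℝ) (f : ℝ → ℂ) : ℝ :=
  LpNorm p f + holderSemi p r α f

/-- Membership in the Hölder space `H_p^{r,α}`. -/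
def MemHolderSp (p : ℝ≥0∞) (r : ℕ) (α : ℝ) (f : ℝ → ℂ) : Prop :=
  MemLp' p f ∧
    BddAbove (Set.range fun h : {h : ℝ // 0 < h} => LpNorm p (delta h.1 r f) / h.1 ^ α)

/-- `T` is a trigonometric polynomial of degree at most `n`. -/
def IsTrigPoly (n : ℕ) (T : ℝ → ℂ) : Prop :=
  ∃ c : ℤ → ℂ, ∀ x : ℝ,
    T x = ∑ ν ∈ Finset.Icc (-(n : ℤ)) (n : ℤ), c ν * Complex.exp (Complex.I * ν * x)

/-- Best approximation `E_n(f)_p` by trigonometric polynomials of degree at most `n`. -/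
def bestApprox (p : ℝ≥0∞) (n : ℕ) (f : ℝ → ℂ) : ℝ :=
  sInf {y : ℝ | ∃ T, IsTrigPoly n T ∧ y = LpNorm p (fun x => f x - T x)}

/-- Best approximation `E_n(f)_{H_p^{r,α}}` in the Hölder space. -/
def bestApproxH (p : ℝ≥0∞) (r : ℕ) (α : ℝ) (n : ℕ) (f : ℝ → ℂ) : ℝ :=
  sInf {y : ℝ | ∃ T, IsTrigPoly n T ∧ y = holderNorm p r α (fun x => f x - T x)}

/-- `θ_{k,α}(f,δ)_p = sup_{0<h≤δ} h^{-α} ω_k(f,h)_p`. -/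
def theta (p : ℝ≥0∞) (k : ℕ) (α : ℝ) (f : ℝ → ℂ) (δ : ℝ) : ℝ :=
  ⨆ h : {h : ℝ // 0 < h ∧ h ≤ δ}, omega' p k f h.1 / h.1 ^ α

/-- `ψ_{k,r,α}(f,δ)_p = sup_{0<h≤δ} h^{-α} ω_k(Δ_h^r f, δ)_p`. -/
def psi (p : ℝ≥0∞) (k r : ℕ) (α : ℝ) (f : ℝ → ℂ) (δ : ℝ) : ℝ :=
  ⨆ h : {h : ℝ // 0 < h ∧ h ≤ δ}, omega' p k (delta h.1 r f) δ / h.1 ^ α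

/-- `p₁ = min(p,1)` (as a real exponent). -/
def p1 (p : ℝ≥0∞) : ℝ := if p = ⊤ then 1 else min p.toReal 1

/-- Condition (*): `(∫_0^δ (t^{-α} ω_{r+k}(f,t)_p)^{p₁} dt/t)^{1/p₁} ≤ C₀ δ^{-α} ω_{r+k}(f,δ)_p`
for all `0 < δ < 1`. -/
def condStar (p : ℝ≥0∞) (r k : ℕ) (α C₀ : ℝ) (f : ℝ → ℂ) : Prop :=
  ∀ δ : ℝ, 0 < δ → δ < 1 →
    (∫ t in (0:ℝ)..δ, (omega' p (r + k) f t / t ^ α) ^ (p1 p) / t) ^ (p1 p)⁻¹ ≤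
      C₀ * (omega' p (r + k) f δ / δ ^ α)

/-- `g˜_n(λ) = (4n+1)⁻¹ Σ_{j=0}^{4n} g(t_j + λ)`, `t_j = 2πj/(4n+1)`. -/
def tilde (n : ℕ) (g : ℝ → ℂ) : ℝ → ℂ :=
  fun lam => ((4 * n + 1 : ℕ) : ℂ)⁻¹ *
    ∑ j ∈ Finset.range (4 * n + 1), g (2 * π * (j : ℝ) / (4 * (n : ℝ) + 1) + lam)

/-- `K` is a sequence of kernels `K_n(x) = Σ_{ν=-n}^n a_{ν,n} e^{iνx}` with `a_{0,n} = 1`. -/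
def IsKernel (K : ℕ → ℝ → ℂ) : Prop :=
  ∀ n : ℕ, ∃ a : ℤ → ℂ, a 0 = 1 ∧
    ∀ x : ℝ, K n x = ∑ ν ∈ Finset.Icc (-(n : ℤ)) (n : ℤ), a ν * Complex.exp (Complex.I * ν * x)

/-- The family of linear polynomial means
`L_{n,λ}(f,x) = (4n+1)⁻¹ Σ_{j=0}^{4n} f(t_j+λ) K_n(x - t_j - λ)`. -/
def Lmean (K : ℕ → ℝ → ℂ) (n : ℕ) (lam : ℝ) (f : ℝ → ℂ) : ℝ → ℂ :=
  fun x => ((4 * n + 1 : ℕ) : ℂ)⁻¹ *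
    ∑ j ∈ Finset.range (4 * n + 1),
      f (2 * π * (j : ℝ) / (4 * (n : ℝ) + 1) + lam) *
        K n (x - 2 * π * (j : ℝ) / (4 * (n : ℝ) + 1) - lam)

/-- The mixed norm `‖g‖_{p̄}` in both the main variable `x` and the parameter `λ`. -/
def LpBarNorm (p : ℝ≥0∞) (g : ℝ → ℝ → ℂ) : ℝ :=
  if p = ⊤ then sSup (Set.range fun q : ℝ × ℝ => ‖g q.1 q.2‖)
  else ((2 * π)⁻¹ *
    ∫ lam in (0:ℝ)..(2 * π), (LpNorm p (fun x => g x lam)) ^ p.toReal) ^ (p.toReal)⁻¹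

/-- The family `{L_{n,λ}}` is bounded in `L_p`. -/
def FamilyBounded (p : ℝ≥0∞) (K : ℕ → ℝ → ℂ) : Prop :=
  ∃ B : ℝ, ∀ n : ℕ, 0 < n → ∀ f : ℝ → ℂ, MemLp' p f →
    LpBarNorm p (fun x lam => Lmean K n lam f x) ≤ B * LpNorm p f

/-- `‖f - L_{n,λ}(f)‖_{p̄}`. -/
def errBar (K : ℕ → ℝ → ℂ) (p : ℝ≥0∞) (n : ℕ) (f : ℝ → ℂ) : ℝ :=
  LpBarNorm p (fun x lam => f x - Lmean K n lam f x)

/-- `‖f - L_{n,λ}(f)‖_{H_{p̄}^{r,α}}`. -/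
def errHolderBar (K : ℕ → ℝ → ℂ) (p : ℝ≥0∞) (r : ℕ) (α : ℝ) (n : ℕ) (f : ℝ → ℂ) : ℝ :=
  errBar K p n f + ⨆ h : {h : ℝ // 0 < h},
    LpBarNorm p (fun x lam => delta h.1 r (fun y => f y - Lmean K n lam f y) x) / h.1 ^ α

/-- `w ∈ Ω_p`: a general modulus of smoothness. -/
def IsOmegaClass (p : ℝ≥0∞) (w : (ℝ → ℂ) → ℝ → ℝ) : Prop :=
  ∃ Cw > (0:ℝ),
    (∀ f, MemLp' p f → ∀ δ : ℝ, 0 < δ → 0 ≤ w f δ ∧ w f δ ≤ Cw * LpNorm p f) ∧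
    ∀ f g, MemLp' p f → MemLp' p g → ∀ δ : ℝ, 0 < δ →
      w (fun x => f x + g x) δ ≤ Cw * (w f δ + w g δ)

/-- `w(f,δ)_{H_p^{r,α}} = w(f,δ)_p + sup_{h>0} h^{-α} w(Δ_h^r f, δ)_p`. -/
def wHolder (w : (ℝ → ℂ) → ℝ → ℝ) (r : ℕ) (α : ℝ) (f : ℝ → ℂ) (δ : ℝ) : ℝ :=
  w f δ + ⨆ h : {h : ℝ // 0 < h}, w (delta h.1 r f) δ / h.1 ^ α

/-- Fourier means `L_n(f,x) = ∫_𝕋 f(t) K_n(x-t) dt`. -/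
def Fmean (K : ℕ → ℝ → ℂ) (n : ℕ) (f : ℝ → ℂ) : ℝ → ℂ :=
  fun x => ∫ t in (0:ℝ)..(2 * π), f t * K n (x - t)

end

/-!
Take `f = g = 0` and `T_n = -b_m` with `m = ⌊√(n/3)⌋`, where `b_m(x) = (m Φ_m(1))⁻¹ Φ_m(sin mx)`
(`bump m`) and `Φ_m(t) = ∫₀ᵗ (1 - u²)^m du` (`powIntegral m`). Since `Φ_m` is an odd polynomial
of degree `2m+1`, `b_m` is a trigonometric polynomial of degree `(2m+1)m ≤ n`: a smoothed square
wave of amplitude `1/m` and period `2π/m`, so `‖b_m‖_p ≤ 1/m`. Its derivative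
`Φ_m(1)⁻¹ cos^{2m+1}(mx)` is concentrated near the zeros of `sin mx`; as `Φ_m(1) ≥ 2/(3√m)` and
the mean of `cos^{2s}` is at most `(2s+1)^{-1/2}`, its `p`-th power mean is `O(m^{(p-1)/2}) → 0`
for `p < 1`. On the other hand `b_m(x + π/m) = -b_m(x)`, and concavity of `Φ_m` on `[0,1]` gives
`m |b_m(x)| ≥ |sin mx|`, so `‖Δ_{π/m} b_m‖_p / (π/m) ≥ (2/π) ‖sin mx‖_p ≥ (2/π) 2^{-1/p}`.
-/

open intervalIntegral

section LpNorm

variable {p : ℝ≥0∞}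

theorem LpNorm_of_ne_top (hp : p ≠ ⊤) (v : ℝ → ℂ) :
    LpNorm p v = ((2 * π)⁻¹ * ∫ x in (0:ℝ)..(2 * π), ‖v x‖ ^ p.toReal) ^ p.toReal⁻¹ := by
  simp [LpNorm, hp]

theorem mean_rpow_norm_nonneg (q : ℝ) (v : ℝ → ℂ) :
    0 ≤ (2 * π)⁻¹ * ∫ x in (0:ℝ)..(2 * π), ‖v x‖ ^ q :=
  mul_nonneg (by positivity) <|
    integral_nonneg (by positivity) fun _ _ => Real.rpow_nonneg (norm_nonneg _) _

theorem LpNorm_nonneg (hp : p ≠ ⊤) (v : ℝ → ℂ) : 0 ≤ LpNorm p v := by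
  rw [LpNorm_of_ne_top hp]
  exact Real.rpow_nonneg (mean_rpow_norm_nonneg _ v) _

theorem LpNorm_le_of_mean_le (hp : p ≠ ⊤) (hp0 : p ≠ 0) {v : ℝ → ℂ} {B : ℝ} (hB : 0 ≤ B)
    (h : (2 * π)⁻¹ * ∫ x in (0:ℝ)..(2 * π), ‖v x‖ ^ p.toReal ≤ B ^ p.toReal) :
    LpNorm p v ≤ B := by
  rw [LpNorm_of_ne_top hp, Real.rpow_inv_le_iff_of_pos (mean_rpow_norm_nonneg _ v) hB
    (ENNReal.toReal_pos hp0 hp)]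
  exact h

theorem le_LpNorm_of_le_mean (hp : p ≠ ⊤) (hp0 : p ≠ 0) {v : ℝ → ℂ} {B : ℝ} (hB : 0 ≤ B)
    (h : B ^ p.toReal ≤ (2 * π)⁻¹ * ∫ x in (0:ℝ)..(2 * π), ‖v x‖ ^ p.toReal) :
    B ≤ LpNorm p v := by
  rw [LpNorm_of_ne_top hp, Real.le_rpow_inv_iff_of_pos hB (mean_rpow_norm_nonneg _ v)
    (ENNReal.toReal_pos hp0 hp)]
  exact h

theorem intervalIntegrable_norm_rpow {u : ℝ → ℂ} (hu : Continuous u) {q : ℝ}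
    (hq : 0 ≤ q) (a b : ℝ) : IntervalIntegrable (fun x => ‖u x‖ ^ q) volume a b :=
  ((continuous_norm.comp hu).rpow_const fun _ => Or.inr hq).intervalIntegrable a b

theorem LpNorm_mono (hp : p ≠ ⊤) (hp0 : p ≠ 0) {u v : ℝ → ℂ} (hu : Continuous u)
    (hv : Continuous v) (h : ∀ x, ‖u x‖ ≤ ‖v x‖) : LpNorm p u ≤ LpNorm p v := by
  have hq := ENNReal.toReal_pos hp0 hp
  rw [LpNorm_of_ne_top hp, LpNorm_of_ne_top hp]
  refine Real.rpow_le_rpow (mean_rpow_norm_nonneg _ u) ?_ (inv_nonneg.2 hq.le)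
  gcongr
  exact integral_mono_on (by positivity) (intervalIntegrable_norm_rpow hu hq.le _ _)
    (intervalIntegrable_norm_rpow hv hq.le _ _) fun x _ =>
      Real.rpow_le_rpow (norm_nonneg _) (h x) hq.le

theorem LpNorm_le_of_norm_le (hp : p ≠ ⊤) (hp0 : p ≠ 0) {v : ℝ → ℂ} (hv : Continuous v)
    {B : ℝ} (h : ∀ x, ‖v x‖ ≤ B) : LpNorm p v ≤ B := by
  have hB : 0 ≤ B := (norm_nonneg _).trans (h 0)
  refine LpNorm_le_of_mean_le hp hp0 hB ?_
  have hq := ENNReal.toReal_pos hp0 hp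
  calc (2 * π)⁻¹ * ∫ x in (0:ℝ)..(2 * π), ‖v x‖ ^ p.toReal
      ≤ (2 * π)⁻¹ * ∫ x in (0:ℝ)..(2 * π), B ^ p.toReal := by
        gcongr
        exact integral_mono_on (by positivity) (intervalIntegrable_norm_rpow hv hq.le _ _)
          intervalIntegrable_const fun x _ => Real.rpow_le_rpow (norm_nonneg _) (h x) hq.le
    _ = B ^ p.toReal := by simp [field]

theorem LpNorm_const_mul (hp : p ≠ ⊤) (hp0 : p ≠ 0) (c : ℂ) (v : ℝ → ℂ) :
    LpNorm p (fun x => c * v x) = ‖c‖ * LpNorm p v := by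
  have hq := ENNReal.toReal_pos hp0 hp
  simp_rw [LpNorm_of_ne_top hp, norm_mul, Real.mul_rpow (norm_nonneg _) (norm_nonneg _),
    intervalIntegral.integral_const_mul, mul_left_comm (2 * π)⁻¹]
  rw [Real.mul_rpow (by positivity) (mean_rpow_norm_nonneg _ v),
    Real.rpow_rpow_inv (norm_nonneg _) hq.ne']

theorem tendsto_LpNorm_zero_of_mean (hp : p ≠ ⊤) (hp0 : p ≠ 0) {v : ℕ → ℝ → ℂ}
    (h : Tendsto (fun n => (2 * π)⁻¹ * ∫ x in (0:ℝ)..(2 * π), ‖v n x‖ ^ p.toReal) atTop (𝓝 0)) :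
    Tendsto (fun n => LpNorm p (v n)) atTop (𝓝 0) := by
  have hq := ENNReal.toReal_pos hp0 hp
  simpa [LpNorm_of_ne_top hp, Real.zero_rpow (inv_ne_zero hq.ne')] using
    h.rpow_const (Or.inr (inv_nonneg.2 hq.le))

theorem memLp'_zero (p : ℝ≥0∞) : MemLp' p (fun _ => 0) := by
  refine ⟨fun _ => rfl, ?_⟩
  split_ifs
  · exact continuous_const
  · exact ⟨measurable_const, intervalIntegrable_const⟩

end LpNorm

section Holder

variable {p : ℝ≥0∞}

theorem delta_one (h : ℝ) (f : ℝ → ℂ) : delta h 1 f = fun x => f x - f (x + h) := by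
  ext x
  simp [delta, Finset.sum_range_succ, sub_eq_add_neg]

theorem LpNorm_delta_one_le (hp : p ≠ ⊤) (hp0 : p ≠ 0) {f : ℝ → ℂ} {K : ℝ≥0}
    (hf : LipschitzWith K f) {h : ℝ} (hh : 0 ≤ h) : LpNorm p (delta h 1 f) ≤ K * h := by
  rw [delta_one]
  refine LpNorm_le_of_norm_le hp hp0
    (hf.continuous.sub (hf.continuous.comp (continuous_add_const h))) fun x => ?_
  simpa [dist_eq_norm, abs_of_nonneg hh] using hf.dist_le_mul x (x + h)

theorem LpNorm_delta_one_div_le_holderSemi (hp : p ≠ ⊤) (hp0 : p ≠ 0) {f : ℝ → ℂ} {K : ℝ≥0}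
    (hf : LipschitzWith K f) {h : ℝ} (hh : 0 < h) :
    LpNorm p (delta h 1 f) / h ≤ holderSemi p 1 1 f := by
  have hbdd : BddAbove (Set.range fun h : {h : ℝ // 0 < h} =>
      LpNorm p (delta h.1 1 f) / h.1 ^ (1 : ℝ)) := by
    refine ⟨K, ?_⟩
    rintro _ ⟨⟨t, ht⟩, rfl⟩
    dsimp only
    rw [Real.rpow_one, div_le_iff₀ ht]
    exact LpNorm_delta_one_le hp hp0 hf ht.le
  simpa [holderSemi] using le_ciSup hbdd ⟨h, hh⟩

end Holder

section TrigIntegrals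

theorem integral_cos_pow_two_mul_sq_le {b : ℝ} (hb : sin b = 0) (s : ℕ) :
    (∫ x in (0:ℝ)..b, cos x ^ (2 * s)) ^ 2 * (2 * s + 1) ≤ b ^ 2 := by
  induction s with
  | zero => simp
  | succ s ih =>
    have hrec : ∫ x in (0:ℝ)..b, cos x ^ (2 * (s + 1)) =
        (2 * s + 1) / (2 * s + 2) * ∫ x in (0:ℝ)..b, cos x ^ (2 * s) := by
      rw [show 2 * (s + 1) = 2 * s + 2 by ring, integral_cos_pow, hb, sin_zero]
      push_cast
      ring
    rw [hrec]
    set I := ∫ x in (0:ℝ)..b, cos x ^ (2 * s)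
    have hs : (0:ℝ) ≤ s := s.cast_nonneg
    calc ((2 * s + 1) / (2 * s + 2) * I) ^ 2 * (2 * ((s + 1 : ℕ) : ℝ) + 1)
        = I ^ 2 * (2 * s + 1) * ((2 * s + 1) * (2 * s + 3) / (2 * s + 2) ^ 2) := by
          push_cast
          field_simp
          ring
      _ ≤ b ^ 2 * 1 := by
          gcongr
          rw [div_le_one (by positivity)]
          nlinarith
      _ = b ^ 2 := mul_one _

theorem integral_cos_mul_pow_le {m : ℕ} (hm : m ≠ 0) (s : ℕ) :
    ∫ x in (0:ℝ)..(2 * π), cos (m * x) ^ (2 * s) ≤ 2 * π / √(2 * s + 1) := by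
  have hm' : (0:ℝ) < m := by positivity
  have hsin : sin (m * (2 * π)) = 0 := (sin_periodic.nat_mul_eq m).trans sin_zero
  have key := integral_cos_pow_two_mul_sq_le hsin s
  rw [integral_comp_mul_left (fun x => cos x ^ (2 * s)) hm'.ne', mul_zero, smul_eq_mul]
  set I := ∫ x in (0:ℝ)..(m * (2 * π)), cos x ^ (2 * s)
  have hI : I ≤ m * (2 * π) / √(2 * s + 1) := by
    rw [le_div_iff₀ (by positivity)]
    calc I * √(2 * s + 1) ≤ |I| * √(2 * s + 1) := by gcongr; exact le_abs_self I
      _ = √(I ^ 2 * (2 * s + 1)) := by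
          rw [Real.sqrt_mul (sq_nonneg _), Real.sqrt_sq_eq_abs]
      _ ≤ √((m * (2 * π)) ^ 2) := Real.sqrt_le_sqrt key
      _ = m * (2 * π) := Real.sqrt_sq (by positivity)
  calc (m:ℝ)⁻¹ * I ≤ (m:ℝ)⁻¹ * (m * (2 * π) / √(2 * s + 1)) := by gcongr
    _ = 2 * π / √(2 * s + 1) := by field_simp

theorem integral_sin_mul_sq {m : ℕ} (hm : m ≠ 0) :
    ∫ x in (0:ℝ)..(2 * π), sin (m * x) ^ 2 = π := by
  have hm' : (m:ℝ) ≠ 0 := by positivity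
  have hsin : sin (m * (2 * π)) = 0 := (sin_periodic.nat_mul_eq m).trans sin_zero
  rw [integral_comp_mul_left (fun x => sin x ^ 2) hm', integral_sin_sq, hsin]
  simp [field]

end TrigIntegrals

section PowIntegral

noncomputable def powIntegral (m : ℕ) (t : ℝ) : ℝ := ∫ u in (0:ℝ)..t, (1 - u ^ 2) ^ m

variable (m : ℕ)

theorem hasDerivAt_powIntegral (t : ℝ) : HasDerivAt (powIntegral m) ((1 - t ^ 2) ^ m) t :=
  (Continuous.integral_hasStrictDerivAt (by fun_prop) 0 t).hasDerivAt

theorem powIntegral_eq_sum (t : ℝ) :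
    powIntegral m t = ∑ j ∈ Finset.range (m + 1),
      (-1) ^ j * m.choose j / (2 * j + 1) * t ^ (2 * j + 1) := by
  have hexp : ∀ u : ℝ, (1 - u ^ 2) ^ m =
      ∑ j ∈ Finset.range (m + 1), (-1) ^ j * m.choose j * u ^ (2 * j) := fun u => by
    rw [sub_eq_neg_add, add_pow]
    refine Finset.sum_congr rfl fun j _ => ?_
    rw [neg_pow, ← pow_mul]
    ring
  simp_rw [powIntegral, hexp]
  rw [intervalIntegral.integral_finsetSum fun j _ =>
    Continuous.intervalIntegrable (by fun_prop) _ _]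
  refine Finset.sum_congr rfl fun j _ => ?_
  rw [intervalIntegral.integral_const_mul, integral_pow]
  field_simp
  simp

theorem powIntegral_neg (t : ℝ) : powIntegral m (-t) = -powIntegral m t := by
  simp_rw [powIntegral_eq_sum, ← Finset.sum_neg_distrib, Odd.neg_pow (odd_two_mul_add_one _),
    mul_neg]

theorem intervalIntegrable_one_sub_sq_pow (a b : ℝ) :
    IntervalIntegrable (fun u : ℝ => (1 - u ^ 2) ^ m) volume a b :=
  Continuous.intervalIntegrable (by fun_prop) a b

theorem powIntegral_one_pos : 0 < powIntegral m 1 :=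
  intervalIntegral_pos_of_pos_on (intervalIntegrable_one_sub_sq_pow m 0 1)
    (fun u hu => pow_pos (by nlinarith [hu.1, hu.2]) m) zero_lt_one

theorem powIntegral_le_one {t : ℝ} (h0 : 0 ≤ t) (h1 : t ≤ 1) :
    powIntegral m t ≤ powIntegral m 1 := by
  rw [← sub_nonneg, powIntegral, powIntegral, integral_interval_sub_left
    (intervalIntegrable_one_sub_sq_pow m 0 1) (intervalIntegrable_one_sub_sq_pow m 0 t)]
  exact integral_nonneg h1 fun u hu => pow_nonneg (by nlinarith [hu.1, hu.2]) m

theorem concaveOn_powIntegral : ConcaveOn ℝ (Set.Icc 0 1) (powIntegral m) := by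
  refine AntitoneOn.concaveOn_of_deriv (convex_Icc 0 1)
    (fun t _ => (hasDerivAt_powIntegral m t).continuousAt.continuousWithinAt)
    (fun t _ => (hasDerivAt_powIntegral m t).differentiableAt.differentiableWithinAt) ?_
  rw [interior_Icc]
  intro s hs t ht hst
  simp only [(hasDerivAt_powIntegral m _).deriv]
  exact pow_le_pow_left₀ (by nlinarith [ht.1, ht.2]) (by nlinarith [hs.1]) m

theorem mul_powIntegral_one_le {t : ℝ} (h0 : 0 ≤ t) (h1 : t ≤ 1) :
    t * powIntegral m 1 ≤ powIntegral m t := by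
  have := (concaveOn_powIntegral m).2 (Set.left_mem_Icc.2 zero_le_one)
    (Set.right_mem_Icc.2 zero_le_one) (sub_nonneg.2 h1) h0 (by ring)
  simpa [powIntegral] using this

theorem abs_powIntegral_abs (t : ℝ) : |powIntegral m (|t|)| = |powIntegral m t| := by
  rcases le_total 0 t with h | h
  · rw [abs_of_nonneg h]
  · rw [abs_of_nonpos h, powIntegral_neg, abs_neg]

theorem abs_powIntegral_le {t : ℝ} (ht : |t| ≤ 1) : |powIntegral m t| ≤ powIntegral m 1 := by
  have h0 := mul_nonneg (abs_nonneg t) (powIntegral_one_pos m).le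
  rw [← abs_powIntegral_abs, abs_of_nonneg (h0.trans (mul_powIntegral_one_le m (abs_nonneg t) ht))]
  exact powIntegral_le_one m (abs_nonneg t) ht

theorem abs_mul_powIntegral_one_le {t : ℝ} (ht : |t| ≤ 1) :
    |t| * powIntegral m 1 ≤ |powIntegral m t| := by
  rw [← abs_powIntegral_abs]
  exact (mul_powIntegral_one_le m (abs_nonneg t) ht).trans (le_abs_self _)

theorem two_div_three_sqrt_le_powIntegral_one (hm : m ≠ 0) :
    2 / (3 * √m) ≤ powIntegral m 1 := by
  have hsqrt : 1 ≤ √m := Real.one_le_sqrt.2 (by exact_mod_cast Nat.one_le_iff_ne_zero.2 hm)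
  set a := (√m)⁻¹
  have ha0 : 0 < a := by positivity
  have ha1 : a ≤ 1 := inv_le_one_of_one_le₀ hsqrt
  have hma : (m:ℝ) * a ^ 2 = 1 := by
    rw [inv_pow, Real.sq_sqrt m.cast_nonneg, mul_inv_cancel₀ (by exact_mod_cast hm)]
  calc 2 / (3 * √m) = a - m * a ^ 3 / 3 := by
        rw [show (m:ℝ) * a ^ 3 = m * a ^ 2 * a by ring, hma]
        simp only [a]
        field_simp
        ring
    _ = ∫ u in (0:ℝ)..a, (1 + m * -u ^ 2) := by
        simp_rw [mul_neg, ← sub_eq_add_neg]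
        rw [intervalIntegral.integral_sub intervalIntegrable_const
          (Continuous.intervalIntegrable (by fun_prop) _ _), intervalIntegral.integral_const,
          intervalIntegral.integral_const_mul, integral_pow, smul_eq_mul]
        ring
    _ ≤ powIntegral m a := by
        refine integral_mono_on ha0.le (Continuous.intervalIntegrable (by fun_prop) _ _)
          (intervalIntegrable_one_sub_sq_pow m 0 a) fun u hu => ?_
        rw [sub_eq_add_neg]
        exact one_add_mul_le_pow (by nlinarith [hu.1, hu.2]) m
    _ ≤ powIntegral m 1 := powIntegral_le_one m ha0.le ha1

end PowIntegral

section TrigPoly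

theorem isTrigPoly_const_mul_exp {n : ℕ} {k : ℤ} (hk : |k| ≤ n) (a : ℂ) :
    IsTrigPoly n fun x => a * Complex.exp (Complex.I * k * x) := by
  classical
  refine ⟨Pi.single k a, fun x => ?_⟩
  rw [Finset.sum_eq_single_of_mem k (Finset.mem_Icc.2 (abs_le.1 hk))
    fun j _ hj => by simp [Pi.single_eq_of_ne hj], Pi.single_eq_same]

theorem IsTrigPoly.sum {ι : Type*} {n : ℕ} (s : Finset ι) {T : ι → ℝ → ℂ}
    (h : ∀ i ∈ s, IsTrigPoly n (T i)) : IsTrigPoly n fun x => ∑ i ∈ s, T i x := by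
  choose c hc using h
  refine ⟨fun ν => ∑ i ∈ s.attach, c i.1 i.2 ν, fun x => ?_⟩
  dsimp only
  rw [← Finset.sum_attach s, Finset.sum_congr rfl fun i _ => hc i.1 i.2 x, Finset.sum_comm]
  simp_rw [Finset.sum_mul]

theorem IsTrigPoly.neg {n : ℕ} {T : ℝ → ℂ} (h : IsTrigPoly n T) :
    IsTrigPoly n fun x => -T x := by
  obtain ⟨c, hc⟩ := h
  exact ⟨-c, fun x => by simp [hc, Finset.sum_neg_distrib]⟩

theorem ofReal_sin_mul_pow_eq_sum (m K : ℕ) (x : ℝ) :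
    (sin (m * x) : ℂ) ^ K = ∑ l ∈ Finset.range (K + 1),
      (Complex.I / 2) ^ K * K.choose l * (-1) ^ (K - l) *
        Complex.exp (Complex.I * (((K:ℤ) - 2 * l) * m : ℤ) * x) := by
  rw [Complex.ofReal_sin, Complex.sin, mul_div_assoc, sub_eq_add_neg, mul_comm, mul_pow,
    add_pow, Finset.mul_sum]
  refine Finset.sum_congr rfl fun l hl => ?_
  have hlK : l ≤ K := Nat.lt_succ_iff.mp (Finset.mem_range.mp hl)
  rw [neg_pow, ← Complex.exp_nat_mul, ← Complex.exp_nat_mul,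
    mul_left_comm _ (_ ^ (K - l)), ← Complex.exp_add]
  push_cast [Nat.cast_sub hlK]
  ring_nf

theorem isTrigPoly_const_mul_sin_mul_pow {n m K : ℕ} (h : K * m ≤ n) (a : ℂ) :
    IsTrigPoly n fun x => a * (sin (m * x) : ℂ) ^ K := by
  simp_rw [ofReal_sin_mul_pow_eq_sum, Finset.mul_sum, ← mul_assoc]
  refine IsTrigPoly.sum _ fun l hl => isTrigPoly_const_mul_exp ?_ _
  have hlK : l ≤ K := Nat.lt_succ_iff.mp (Finset.mem_range.mp hl)
  rw [abs_mul, Nat.abs_cast]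
  have : |(K:ℤ) - 2 * l| ≤ K := abs_le.2 ⟨by omega, by omega⟩
  exact_mod_cast (mul_le_mul_of_nonneg_right this m.cast_nonneg).trans (by exact_mod_cast h)

end TrigPoly

section Bump

noncomputable def bump (m : ℕ) (x : ℝ) : ℝ :=
  (m * powIntegral m 1)⁻¹ * powIntegral m (sin (m * x))

theorem abs_bump_le (m : ℕ) (x : ℝ) : |bump m x| ≤ (m:ℝ)⁻¹ := by
  have hΦ := powIntegral_one_pos m
  rw [bump, abs_mul, abs_of_nonneg (by positivity)]
  calc (m * powIntegral m 1)⁻¹ * |powIntegral m (sin (m * x))|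
      ≤ (m * powIntegral m 1)⁻¹ * powIntegral m 1 := by
        gcongr
        exact abs_powIntegral_le m (abs_sin_le_one _)
    _ = (m:ℝ)⁻¹ := by rw [mul_inv, mul_assoc, inv_mul_cancel₀ hΦ.ne', mul_one]

variable {m : ℕ}

theorem abs_sin_le_mul_abs_bump (hm : m ≠ 0) (x : ℝ) : |sin (m * x)| ≤ m * |bump m x| := by
  have hΦ := powIntegral_one_pos m
  have hm' : (0:ℝ) < m := by positivity
  have h : (m:ℝ) * |bump m x| = (powIntegral m 1)⁻¹ * |powIntegral m (sin (m * x))| := by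
    rw [bump, abs_mul, abs_of_pos (inv_pos.2 (mul_pos hm' hΦ))]
    field_simp
  rw [h, le_inv_mul_iff₀ hΦ, mul_comm]
  exact abs_mul_powIntegral_one_le m (abs_sin_le_one _)

theorem bump_add_pi_div (hm : m ≠ 0) (x : ℝ) : bump m (x + π / m) = -bump m x := by
  have hm' : (m:ℝ) ≠ 0 := by positivity
  rw [bump, bump, mul_add, mul_div_cancel₀ _ hm', sin_add_pi, powIntegral_neg, mul_neg]

theorem hasDerivAt_bump (hm : m ≠ 0) (x : ℝ) :
    HasDerivAt (bump m) ((powIntegral m 1)⁻¹ * cos (m * x) ^ (2 * m + 1)) x := by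
  have hm' : (m:ℝ) ≠ 0 := by positivity
  have hsin : HasDerivAt (fun y => sin (m * y)) (cos (m * x) * m) x := by
    simpa using ((hasDerivAt_id x).const_mul (m:ℝ)).sin
  refine (((hasDerivAt_powIntegral m _).comp x hsin).const_mul
    (m * powIntegral m 1)⁻¹).congr_deriv ?_
  rw [← cos_sq', ← pow_mul, pow_succ]
  field_simp

theorem lipschitzWith_bump (hm : m ≠ 0) :
    LipschitzWith (Real.toNNReal (powIntegral m 1)⁻¹) fun x => (bump m x : ℂ) := by
  have hc : 0 < (powIntegral m 1)⁻¹ := inv_pos.2 (powIntegral_one_pos m)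
  have hK : LipschitzWith (Real.toNNReal (powIntegral m 1)⁻¹) (bump m) :=
    lipschitzWith_of_nnnorm_deriv_le (fun x => (hasDerivAt_bump hm x).differentiableAt)
      fun x => by
        rw [(hasDerivAt_bump hm x).deriv, ← NNReal.coe_le_coe, coe_nnnorm,
          Real.coe_toNNReal _ hc.le, norm_mul, norm_pow, Real.norm_of_nonneg hc.le]
        exact mul_le_of_le_one_right hc.le (pow_le_one₀ (norm_nonneg _) (abs_cos_le_one _))
  simpa [Function.comp_def] using Complex.isometry_ofReal.lipschitz.comp hK

theorem isTrigPoly_bump {n : ℕ} (h : (2 * m + 1) * m ≤ n) :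
    IsTrigPoly n fun x => (bump m x : ℂ) := by
  have hsum : (fun x => (bump m x : ℂ)) = fun x => ∑ j ∈ Finset.range (m + 1),
      (((m * powIntegral m 1)⁻¹ * ((-1) ^ j * m.choose j / (2 * j + 1)) : ℝ) : ℂ) *
        (sin (m * x) : ℂ) ^ (2 * j + 1) := by
    ext x
    rw [bump, powIntegral_eq_sum m (sin (m * x)), Finset.mul_sum, Complex.ofReal_sum]
    refine Finset.sum_congr rfl fun j _ => ?_
    rw [Complex.ofReal_mul, Complex.ofReal_mul, Complex.ofReal_mul, Complex.ofReal_pow]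
    ring
  rw [hsum]
  refine IsTrigPoly.sum _ fun j hj => isTrigPoly_const_mul_sin_mul_pow ?_ _
  have hjm : j ≤ m := Nat.lt_succ_iff.mp (Finset.mem_range.mp hj)
  exact le_trans (Nat.mul_le_mul_right _ (by omega)) h

end Bump

section BumpNorms

variable {p : ℝ≥0∞} {m : ℕ}

theorem LpNorm_bump_le (hp : p ≠ ⊤) (hp0 : p ≠ 0) (hm : m ≠ 0) :
    LpNorm p (fun x => (bump m x : ℂ)) ≤ (m:ℝ)⁻¹ :=
  LpNorm_le_of_norm_le hp hp0 (lipschitzWith_bump hm).continuous fun x => by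
    simpa using abs_bump_le m x

theorem le_LpNorm_sin_mul (hp : p ≠ ⊤) (hp0 : p ≠ 0) (hp2 : p.toReal ≤ 2) (hm : m ≠ 0) :
    (1 / 2 : ℝ) ^ p.toReal⁻¹ ≤ LpNorm p (fun x => (sin (m * x) : ℂ)) := by
  have hq := ENNReal.toReal_pos hp0 hp
  refine le_LpNorm_of_le_mean hp hp0 (by positivity) ?_
  rw [Real.rpow_inv_rpow (by norm_num) hq.ne']
  calc (1 / 2 : ℝ) = (2 * π)⁻¹ * ∫ x in (0:ℝ)..(2 * π), sin (m * x) ^ 2 := by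
        rw [integral_sin_mul_sq hm]
        field_simp
    _ ≤ (2 * π)⁻¹ * ∫ x in (0:ℝ)..(2 * π), ‖(sin (m * x) : ℂ)‖ ^ p.toReal := by
        gcongr
        refine integral_mono_on (by positivity) (Continuous.intervalIntegrable (by fun_prop) _ _)
          (intervalIntegrable_norm_rpow (by fun_prop) hq.le _ _) fun x _ => ?_
        rw [Complex.norm_real, Real.norm_eq_abs, ← sq_abs, ← Real.rpow_two]
        exact Real.rpow_le_rpow_of_exponent_ge' (abs_nonneg _) (abs_sin_le_one _) hq.le hp2

theorem le_holderSemi_bump (hp : p ≠ ⊤) (hp0 : p ≠ 0) (hp2 : p.toReal ≤ 2) (hm : m ≠ 0) :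
    2 / π * (1 / 2 : ℝ) ^ p.toReal⁻¹ ≤ holderSemi p 1 1 (fun x => (bump m x : ℂ)) := by
  have hm' : (0:ℝ) < m := by positivity
  have hdelta : delta (π / m) 1 (fun x => (bump m x : ℂ)) = fun x => 2 * (bump m x : ℂ) := by
    rw [delta_one]
    ext x
    rw [bump_add_pi_div hm]
    push_cast
    ring
  have hsin : LpNorm p (fun x => (sin (m * x) : ℂ)) ≤ m * LpNorm p (fun x => (bump m x : ℂ)) := by
    have := LpNorm_const_mul hp hp0 (m : ℂ) (fun x => (bump m x : ℂ))
    rw [Complex.norm_natCast] at this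
    rw [← this]
    refine LpNorm_mono hp hp0 (by fun_prop)
      (continuous_const.mul (lipschitzWith_bump hm).continuous) fun x => ?_
    rw [Complex.norm_real, Real.norm_eq_abs, norm_mul, Complex.norm_natCast, Complex.norm_real,
      Real.norm_eq_abs]
    exact abs_sin_le_mul_abs_bump hm x
  calc 2 / π * (1 / 2 : ℝ) ^ p.toReal⁻¹
      ≤ 2 / π * (m * LpNorm p (fun x => (bump m x : ℂ))) := by
        gcongr
        exact (le_LpNorm_sin_mul hp hp0 hp2 hm).trans hsin
    _ = LpNorm p (delta (π / m) 1 (fun x => (bump m x : ℂ))) / (π / m) := by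
        rw [hdelta, LpNorm_const_mul hp hp0, Complex.norm_two]
        field_simp
    _ ≤ holderSemi p 1 1 (fun x => (bump m x : ℂ)) :=
        LpNorm_delta_one_div_le_holderSemi hp hp0 (lipschitzWith_bump hm) (by positivity)

theorem mean_rpow_bump_deriv_le (hp : p ≠ ⊤) (hp0 : p ≠ 0) (hm : m ≠ 0) :
    (2 * π)⁻¹ * ∫ x in (0:ℝ)..(2 * π),
        ‖(((powIntegral m 1)⁻¹ * cos (m * x) ^ (2 * m + 1) : ℝ) : ℂ)‖ ^ p.toReal
      ≤ (powIntegral m 1)⁻¹ ^ p.toReal / √(2 * ⌊m * p.toReal⌋₊ + 1) := by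
  have hq := ENNReal.toReal_pos hp0 hp
  have hc : 0 < (powIntegral m 1)⁻¹ := inv_pos.2 (powIntegral_one_pos m)
  set q := p.toReal
  set s := ⌊m * q⌋₊
  have h2s : ((2 * s : ℕ) : ℝ) ≤ (2 * m + 1 : ℕ) * q := by
    have := Nat.floor_le (a := m * q) (by positivity)
    push_cast
    nlinarith
  have hpt : ∀ x, ‖(((powIntegral m 1)⁻¹ * cos (m * x) ^ (2 * m + 1) : ℝ) : ℂ)‖ ^ q
      ≤ (powIntegral m 1)⁻¹ ^ q * cos (m * x) ^ (2 * s) := fun x => by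
    rw [Complex.norm_real, Real.norm_eq_abs, abs_mul, abs_of_pos hc, abs_pow,
      Real.mul_rpow hc.le (by positivity), ← Real.rpow_natCast, ← Real.rpow_mul (abs_nonneg _),
      ← (even_two_mul s).pow_abs, ← Real.rpow_natCast]
    exact mul_le_mul_of_nonneg_left (Real.rpow_le_rpow_of_exponent_ge' (abs_nonneg _)
      (abs_cos_le_one _) (by positivity) h2s) (by positivity)
  calc (2 * π)⁻¹ * ∫ x in (0:ℝ)..(2 * π),
        ‖(((powIntegral m 1)⁻¹ * cos (m * x) ^ (2 * m + 1) : ℝ) : ℂ)‖ ^ q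
      ≤ (2 * π)⁻¹ * ∫ x in (0:ℝ)..(2 * π), (powIntegral m 1)⁻¹ ^ q * cos (m * x) ^ (2 * s) := by
        gcongr
        exact integral_mono_on (by positivity)
          (intervalIntegrable_norm_rpow (by fun_prop) hq.le _ _)
          (Continuous.intervalIntegrable (by fun_prop) _ _) fun x _ => hpt x
    _ ≤ (2 * π)⁻¹ * ((powIntegral m 1)⁻¹ ^ q * (2 * π / √(2 * s + 1))) := by
        rw [intervalIntegral.integral_const_mul]
        gcongr
        exact integral_cos_mul_pow_le hm s
    _ = (powIntegral m 1)⁻¹ ^ q / √(2 * s + 1) := by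
        field_simp

theorem tendsto_LpNorm_bump_deriv (hp : p ≠ ⊤) (hp0 : p ≠ 0) (hp1 : p.toReal < 1) :
    Tendsto (fun m : ℕ => LpNorm p fun x =>
      (((powIntegral m 1)⁻¹ * cos (m * x) ^ (2 * m + 1) : ℝ) : ℂ)) atTop (𝓝 0) := by
  have hq := ENNReal.toReal_pos hp0 hp
  set q := p.toReal
  set C := (3 / 2 : ℝ) ^ q / √q
  have hbound : ∀ m : ℕ, m ≠ 0 →
      (powIntegral m 1)⁻¹ ^ q / √(2 * ⌊m * q⌋₊ + 1) ≤ C * (m:ℝ) ^ (-((1 - q) / 2)) := by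
    intro m hm
    have hx : (0:ℝ) < m := by positivity
    have hc : (powIntegral m 1)⁻¹ ≤ 3 / 2 * √m := by
      refine (inv_anti₀ (by positivity) (two_div_three_sqrt_le_powIntegral_one m hm)).trans_eq ?_
      field_simp
    have hs : √(m * q) ≤ √(2 * ⌊m * q⌋₊ + 1) := by
      have := Nat.lt_floor_add_one ((m:ℝ) * q)
      exact Real.sqrt_le_sqrt (by linarith [(⌊(m:ℝ) * q⌋₊).cast_nonneg (α := ℝ)])
    calc (powIntegral m 1)⁻¹ ^ q / √(2 * ⌊m * q⌋₊ + 1) ≤ (3 / 2 * √m) ^ q / √(m * q) := by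
          gcongr
          exact (inv_pos.2 (powIntegral_one_pos m)).le
      _ = C * (m:ℝ) ^ (-((1 - q) / 2)) := by
          rw [Real.mul_rpow (by norm_num) (Real.sqrt_nonneg _), Real.sqrt_mul hx.le,
            Real.sqrt_eq_rpow m, ← Real.rpow_mul hx.le,
            show -((1 - q) / 2) = 1 / 2 * q - 1 / 2 by ring, Real.rpow_sub hx]
          simp only [C]
          field_simp
  have hlim : Tendsto (fun m : ℕ => C * (m:ℝ) ^ (-((1 - q) / 2))) atTop (𝓝 0) := by
    simpa using ((tendsto_rpow_neg_atTop (by linarith : 0 < (1 - q) / 2)).comp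
      tendsto_natCast_atTop_atTop).const_mul C
  refine tendsto_LpNorm_zero_of_mean hp hp0
    (squeeze_zero' (Eventually.of_forall fun m => mean_rpow_norm_nonneg _ _) ?_ hlim)
  filter_upwards [eventually_ne_atTop 0] with m hm
  exact (mean_rpow_bump_deriv_le hp hp0 hm).trans (hbound m hm)

end BumpNorms

theorem sqrt_div_three_degree_le (n : ℕ) :
    (2 * Nat.sqrt (n / 3) + 1) * Nat.sqrt (n / 3) ≤ n := by
  have h := Nat.sqrt_le' (n / 3)
  have := Nat.div_mul_le_self n 3
  nlinarith

theorem tendsto_sqrt_div_three : Tendsto (fun n => Nat.sqrt (n / 3)) atTop atTop :=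
  tendsto_atTop_atTop.2 fun b => ⟨3 * b * b, fun n hn => by
    rw [Nat.le_sqrt, Nat.le_div_iff_mul_le three_pos]
    linarith⟩

/-- failure of convergence in `H_p^{1,1}` for `0 < p < 1`, Proposition 3.1. -/
theorem holder_convergence_fails (p : ℝ≥0∞) (hp0 : 0 < p) (hp1 : p < 1) :
    ∃ f g : ℝ → ℂ, ∃ T : ℕ → ℝ → ℂ, MemLp' p f ∧ MemLp' p g ∧
      (∀ n : ℕ, IsTrigPoly n (T n)) ∧
      Filter.Tendsto (fun n : ℕ => LpNorm p (fun x => f x - T n x)) Filter.atTop (nhds 0) ∧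
      Filter.Tendsto (fun n : ℕ => LpNorm p (fun x => g x - deriv (T n) x))
        Filter.atTop (nhds 0) ∧
      ∃ Cf > (0:ℝ), ∃ N : ℕ, ∀ n : ℕ, N ≤ n →
        Cf ≤ holderNorm p 1 1 (fun x => f x - T n x) := by
  have hp : p ≠ ⊤ := hp1.ne_top
  have hq1 : p.toReal < 1 := by
    simpa using (ENNReal.toReal_lt_toReal hp ENNReal.one_ne_top).2 hp1
  set k := fun n => Nat.sqrt (n / 3)
  have hk0 : ∀ᶠ n in atTop, k n ≠ 0 := tendsto_sqrt_div_three.eventually_ne_atTop 0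
  obtain ⟨N, hN⟩ := eventually_atTop.1 hk0
  refine ⟨fun _ => 0, fun _ => 0, fun n x => -(bump (k n) x : ℂ), memLp'_zero p, memLp'_zero p,
    fun n => (isTrigPoly_bump (sqrt_div_three_degree_le n)).neg, ?_, ?_,
    2 / π * (1 / 2 : ℝ) ^ p.toReal⁻¹, by positivity, N, fun n hn => ?_⟩
  · simp only [zero_sub, neg_neg]
    refine squeeze_zero' (Eventually.of_forall fun n => LpNorm_nonneg hp _)
      (hk0.mono fun n hn => LpNorm_bump_le hp hp0.ne' hn) ?_
    exact tendsto_inv_atTop_zero.comp (tendsto_natCast_atTop_atTop.comp tendsto_sqrt_div_three)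
  · refine ((tendsto_LpNorm_bump_deriv hp hp0.ne' hq1).comp tendsto_sqrt_div_three).congr'
      (hk0.mono fun n hn => ?_)
    simp only [Function.comp_apply, zero_sub]
    congr 1
    ext x
    rw [deriv.fun_neg, neg_neg, (hasDerivAt_bump hn x).ofReal_comp.deriv]
  · simp only [zero_sub, neg_neg]
    exact (le_holderSemi_bump hp hp0.ne' (by linarith) (hN n hn)).trans
      (le_add_of_nonneg_left (LpNorm_nonneg hp _))
end

section
/- Let 1≤p≤∞, r∈ℕ, and 0<α≤r. Let {L_n} be a sequence of Fourier means L_n(f,x) = ∫_𝕋 f(t)K_n(x−t)dt generated by kernels K_n(x) = Σ_{ν=−n}^{n} a_{ν,n} e^{iνx} with a_{0,n}=1, whose operator norms on L_p are uniformly bounded in n. Let w∈Ω_p, and suppose there are constants c₀,C₀>0 such that c₀·w(f,1/n)_p ≤ ‖f−L_n(f)‖_p ≤ C₀·w(f,1/n)_p for all f∈L_p and n∈ℕ. Then there exist constants c,C>0, independent of f and n, such that for every f∈H_p^{r,α} and n∈ℕ: c·w(f,1/n)_{H_p^{r,α}} ≤ ‖f−L_n(f)‖_{H_p^{r,α}}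 ≤ C·w(f,1/n)_{H_p^{r,α}}. -/
open MeasureTheory Real Filter
open scoped ENNReal NNReal Topology

/-! Fourier means are convolutions with a trigonometric polynomial, so they commute with
translations and hence with `Δ_h^r`: `Δ_h^r (f - L_n f) = Δ_h^r f - L_n (Δ_h^r f)`. Applying the
assumed equivalence `‖g - L_n g‖_p ≍ w(g, 1/n)_p` to `g = Δ_h^r f`, dividing by `h^α` and taking
the supremum over `h > 0` gives the equivalence for the Hölder seminorms with the same constants;
for the `L_p` parts it is the assumption itself. -/

open Function Finset

lemma rpow_add_le_two_rpow_mul_add_rpow {a b q : ℝ} (ha : 0 ≤ a) (hb : 0 ≤ b) (hq : 0 ≤ q) :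
    (a + b) ^ q ≤ 2 ^ q * (a ^ q + b ^ q) := by
  calc (a + b) ^ q ≤ (2 * max a b) ^ q :=
        rpow_le_rpow (by positivity) (by linarith [le_max_left a b, le_max_right a b]) hq
    _ = 2 ^ q * max a b ^ q := mul_rpow zero_le_two (le_max_of_le_left ha)
    _ ≤ 2 ^ q * (a ^ q + b ^ q) := by
        gcongr
        rcases le_total a b with hab | hab
        · rw [max_eq_right hab]; linarith [rpow_nonneg ha q]
        · rw [max_eq_left hab]; linarith [rpow_nonneg hb q]

lemma memLp'_top_iff {f : ℝ → ℂ} : MemLp' ⊤ f ↔ Periodic f (2 * π) ∧ Continuous f := by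
  simp [MemLp']

lemma memLp'_iff_of_ne_top {p : ℝ≥0∞} (hp : p ≠ ⊤) {f : ℝ → ℂ} :
    MemLp' p f ↔ Periodic f (2 * π) ∧ Measurable f ∧
      IntervalIntegrable (fun x => ‖f x‖ ^ p.toReal) volume 0 (2 * π) := by
  simp [MemLp', hp]

namespace MemLp'

variable {p : ℝ≥0∞} {f g : ℝ → ℂ}

lemma zero : MemLp' p 0 := by
  by_cases hp : p = ⊤
  · subst hp
    exact memLp'_top_iff.2 ⟨fun _ => rfl, continuous_const⟩
  · exact (memLp'_iff_of_ne_top hp).2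
      ⟨fun _ => rfl, measurable_const, intervalIntegrable_const (c := ‖(0 : ℂ)‖ ^ p.toReal)⟩

lemma add (hf : MemLp' p f) (hg : MemLp' p g) : MemLp' p (fun x => f x + g x) := by
  by_cases hp : p = ⊤
  · subst hp
    rw [memLp'_top_iff] at *
    exact ⟨hf.1.add hg.1, hf.2.add hg.2⟩
  · rw [memLp'_iff_of_ne_top hp] at *
    obtain ⟨hf_per, hf_meas, hf_int⟩ := hf
    obtain ⟨hg_per, hg_meas, hg_int⟩ := hg
    refine ⟨hf_per.add hg_per, hf_meas.add hg_meas, ?_⟩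
    refine ((hf_int.add hg_int).const_mul (2 ^ p.toReal)).mono_fun'
      ((hf_meas.add hg_meas).norm.pow_const _).aestronglyMeasurable (ae_of_all _ fun x => ?_)
    dsimp only
    rw [Real.norm_of_nonneg (by positivity)]
    calc ‖f x + g x‖ ^ p.toReal ≤ (‖f x‖ + ‖g x‖) ^ p.toReal :=
          rpow_le_rpow (norm_nonneg _) (norm_add_le _ _) ENNReal.toReal_nonneg
      _ ≤ 2 ^ p.toReal * (‖f x‖ ^ p.toReal + ‖g x‖ ^ p.toReal) :=
          rpow_add_le_two_rpow_mul_add_rpow (norm_nonneg _) (norm_nonneg _)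
            ENNReal.toReal_nonneg

lemma finset_sum {ι : Type*} (s : Finset ι) {F : ι → ℝ → ℂ} (hF : ∀ i ∈ s, MemLp' p (F i)) :
    MemLp' p (fun x => ∑ i ∈ s, F i x) := by
  rw [← Finset.sum_fn]
  exact Finset.sum_induction _ (MemLp' p) (fun _ _ => add) zero hF

lemma const_mul (hf : MemLp' p f) (c : ℂ) : MemLp' p (fun x => c * f x) := by
  by_cases hp : p = ⊤
  · subst hp
    rw [memLp'_top_iff] at *
    exact ⟨fun x => by simp only [hf.1 x], continuous_const.mul hf.2⟩
  · rw [memLp'_iff_of_ne_top hp] at *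
    obtain ⟨hf_per, hf_meas, hf_int⟩ := hf
    refine ⟨fun x => by simp only [hf_per x], hf_meas.const_mul c, ?_⟩
    convert hf_int.const_mul (‖c‖ ^ p.toReal) using 2 with x
    rw [norm_mul, mul_rpow (norm_nonneg _) (norm_nonneg _)]

lemma comp_add_right (hf : MemLp' p f) (a : ℝ) : MemLp' p (fun x => f (x + a)) := by
  have hper : Periodic (fun x => f (x + a)) (2 * π) := fun x => by
    simp only [add_right_comm x, hf.1 (x + a)]
  by_cases hp : p = ⊤
  · subst hp
    rw [memLp'_top_iff] at *
    exact ⟨hper, hf.2.comp (continuous_add_const a)⟩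
  · rw [memLp'_iff_of_ne_top hp] at *
    obtain ⟨hf_per, hf_meas, hf_int⟩ := hf
    refine ⟨hper, hf_meas.comp (measurable_add_const a), ?_⟩
    have hnorm_per : Periodic (fun x => ‖f x‖ ^ p.toReal) (2 * π) := fun x => by
      simp only [hf_per x]
    simpa using (hnorm_per.intervalIntegrable₀ two_pi_pos.ne' hf_int a (2 * π + a)).comp_add_right a

lemma delta (hf : MemLp' p f) (h : ℝ) (r : ℕ) : MemLp' p (_root_.delta h r f) :=
  finset_sum _ fun _ _ => (hf.comp_add_right _).const_mul _

lemma intervalIntegrable (hp : 1 ≤ p) (hf : MemLp' p f) :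
    IntervalIntegrable f volume 0 (2 * π) := by
  by_cases hp_top : p = ⊤
  · subst hp_top
    exact (memLp'_top_iff.1 hf).2.intervalIntegrable _ _
  · obtain ⟨-, hf_meas, hf_int⟩ := (memLp'_iff_of_ne_top hp_top).1 hf
    have hq : 1 ≤ p.toReal := ENNReal.toReal_one ▸ ENNReal.toReal_mono hp_top hp
    refine ((intervalIntegrable_const (c := 1)).add hf_int).mono_fun'
      hf_meas.aestronglyMeasurable (ae_of_all _ fun x => ?_)
    dsimp only
    rcases le_total ‖f x‖ 1 with hx | hx
    · linarith [rpow_nonneg (norm_nonneg (f x)) p.toReal]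
    · linarith [self_le_rpow_of_one_le hx hq]

end MemLp'

namespace IsTrigPoly

variable {n : ℕ} {T : ℝ → ℂ}

lemma continuous (hT : IsTrigPoly n T) : Continuous T := by
  obtain ⟨c, hc⟩ := hT
  rw [funext hc]
  fun_prop

lemma periodic (hT : IsTrigPoly n T) : Periodic T (2 * π) := fun x => by
  obtain ⟨c, hc⟩ := hT
  rw [hc, hc]
  refine Finset.sum_congr rfl fun ν _ => ?_
  rw [show Complex.I * ν * ((x + 2 * π : ℝ) : ℂ) = Complex.I * ν * x + ν * (2 * π * Complex.I) by
    push_cast; ring, Complex.exp_add, Complex.exp_int_mul_two_pi_mul_I, mul_one]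

end IsTrigPoly

lemma IsKernel.isTrigPoly {K : ℕ → ℝ → ℂ} (hK : IsKernel K) (n : ℕ) : IsTrigPoly n (K n) :=
  let ⟨a, _, ha⟩ := hK n
  ⟨a, ha⟩

lemma delta_sub (h : ℝ) (r : ℕ) (f g : ℝ → ℂ) :
    delta h r (fun x => f x - g x) = fun x => delta h r f x - delta h r g x := by
  funext x
  simp only [delta, mul_sub, Finset.sum_sub_distrib]

section Fmean

variable {K : ℕ → ℝ → ℂ} {n : ℕ} {f : ℝ → ℂ}

lemma Fmean_comp_add_right (hf : Periodic f (2 * π)) (hK : Periodic (K n) (2 * π)) (a x : ℝ) :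
    Fmean K n (fun t => f (t + a)) x = Fmean K n f (x + a) := by
  have hper : Periodic (fun s => f s * K n (x + a - s)) (2 * π) := fun s => by
    simp only [hf s, show x + a - (s + 2 * π) = x + a - s - 2 * π by ring, hK.sub_eq]
  calc Fmean K n (fun t => f (t + a)) x
      = ∫ t in (0 : ℝ)..(2 * π), f (t + a) * K n (x + a - (t + a)) := by
        simp only [Fmean, add_sub_add_right_eq_sub]
    _ = ∫ s in a..(a + 2 * π), f s * K n (x + a - s) := by
        rw [intervalIntegral.integral_comp_add_right (fun s => f s * K n (x + a - s)), zero_add,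
          add_comm (2 * π)]
    _ = Fmean K n f (x + a) := by
        rw [hper.intervalIntegral_add_eq a 0, zero_add]
        rfl

lemma Fmean_delta {p : ℝ≥0∞} (hp : 1 ≤ p) (hf : MemLp' p f) (hKc : Continuous (K n))
    (hKper : Periodic (K n) (2 * π)) (h : ℝ) (r : ℕ) :
    Fmean K n (delta h r f) = delta h r (Fmean K n f) := by
  funext x
  have hint : ∀ ν ∈ range (r + 1), IntervalIntegrable
      (fun t => (-1 : ℂ) ^ ν * (r.choose ν : ℂ) * f (t + ν * h) * K n (x - t)) volume 0 (2 * π) :=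
    fun ν _ => (((hf.comp_add_right _).const_mul _).intervalIntegrable hp).mul_continuousOn
      (by fun_prop : Continuous fun t => K n (x - t)).continuousOn
  calc Fmean K n (delta h r f) x
      = ∑ ν ∈ range (r + 1),
          (-1 : ℂ) ^ ν * (r.choose ν : ℂ) * Fmean K n (fun t => f (t + ν * h)) x := by
        simp only [Fmean, delta, Finset.sum_mul]
        rw [intervalIntegral.integral_finsetSum hint]
        simp only [mul_assoc, intervalIntegral.integral_const_mul]
    _ = delta h r (Fmean K n f) x := by
        simp only [Fmean_comp_add_right hf.1 hKper]
        rfl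

lemma delta_sub_Fmean {p : ℝ≥0∞} (hp : 1 ≤ p) (hf : MemLp' p f) (hK : IsKernel K) (h : ℝ)
    (r : ℕ) : delta h r (fun x => f x - Fmean K n f x) =
      fun x => delta h r f x - Fmean K n (delta h r f) x := by
  rw [delta_sub, Fmean_delta hp hf (hK.isTrigPoly n).continuous (hK.isTrigPoly n).periodic]

end Fmean

lemma IsOmegaClass.bddAbove_delta_div {p : ℝ≥0∞} {w : (ℝ → ℂ) → ℝ → ℝ} (hw : IsOmegaClass p w)
    {r : ℕ} {α : ℝ} {f : ℝ → ℂ} (hf : MemHolderSp p r α f) {δ : ℝ} (hδ : 0 < δ) :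
    BddAbove (Set.range fun h : {h : ℝ // 0 < h} => w (delta h.1 r f) δ / h.1 ^ α) := by
  obtain ⟨Cw, hCw, hw_le, -⟩ := hw
  obtain ⟨M, hM⟩ := hf.2
  refine ⟨Cw * M, ?_⟩
  rintro _ ⟨h, rfl⟩
  calc w (delta h.1 r f) δ / h.1 ^ α ≤ Cw * LpNorm p (delta h.1 r f) / h.1 ^ α :=
        div_le_div_of_nonneg_right (hw_le _ (hf.1.delta h.1 r) δ hδ).2
          (rpow_pos_of_pos h.2 α).le
    _ ≤ Cw * M := by
        rw [mul_div_assoc]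
        exact mul_le_mul_of_nonneg_left (hM ⟨h, rfl⟩) hCw.le

lemma mul_div_le_div_and_div_le_mul_div {a b c C d : ℝ} (hd : 0 ≤ d)
    (h : c * a ≤ b ∧ b ≤ C * a) : c * (a / d) ≤ b / d ∧ b / d ≤ C * (a / d) := by
  simp only [← mul_div_assoc]
  exact ⟨div_le_div_of_nonneg_right h.1 hd, div_le_div_of_nonneg_right h.2 hd⟩

lemma mul_ciSup_le_ciSup_and_ciSup_le_mul_ciSup {ι : Sort*} {u v : ι → ℝ} {c C : ℝ}
    (hc : 0 ≤ c) (hC : 0 ≤ C) (hv : BddAbove (Set.range v))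
    (huv : ∀ i, c * v i ≤ u i ∧ u i ≤ C * v i) :
    c * ⨆ i, v i ≤ ⨆ i, u i ∧ ⨆ i, u i ≤ C * ⨆ i, v i := by
  obtain ⟨M, hM⟩ := hv
  have hCv : ∀ i, C * v i ≤ C * M := fun i =>
    mul_le_mul_of_nonneg_left (hM ⟨i, rfl⟩) hC
  rw [Real.mul_iSup_of_nonneg hc, Real.mul_iSup_of_nonneg hC]
  exact ⟨ciSup_mono ⟨C * M, by rintro _ ⟨i, rfl⟩; exact (huv i).2.trans (hCv i)⟩ fun i => (huv i).1,
    ciSup_mono ⟨C * M, by rintro _ ⟨i, rfl⟩; exact hCv i⟩ fun i => (huv i).2⟩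

theorem strong_converse_fourier_general (p : ℝ≥0∞) (hp : 1 ≤ p) (r : ℕ)
    (α : ℝ)
    (K : ℕ → ℝ → ℂ) (hK : IsKernel K)
    (w : (ℝ → ℂ) → ℝ → ℝ) (hw : IsOmegaClass p w)
    (hequiv : ∃ c₀ > (0:ℝ), ∃ C₀ > (0:ℝ), ∀ f : ℝ → ℂ, MemLp' p f → ∀ n : ℕ, 0 < n →
      c₀ * w f (1 / (n : ℝ)) ≤ LpNorm p (fun x => f x - Fmean K n f x) ∧
        LpNorm p (fun x => f x - Fmean K n f x) ≤ C₀ * w f (1 / (n : ℝ))) :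
    ∃ c > (0:ℝ), ∃ C > (0:ℝ), ∀ f : ℝ → ℂ, MemHolderSp p r α f → ∀ n : ℕ, 0 < n →
      c * wHolder w r α f (1 / (n : ℝ)) ≤
          holderNorm p r α (fun x => f x - Fmean K n f x) ∧
        holderNorm p r α (fun x => f x - Fmean K n f x) ≤
          C * wHolder w r α f (1 / (n : ℝ)) := by
  obtain ⟨c₀, hc₀, C₀, hC₀, hequiv⟩ := hequiv
  refine ⟨c₀, hc₀, C₀, hC₀, fun f hf n hn => ?_⟩
  have hsemi := mul_ciSup_le_ciSup_and_ciSup_le_mul_ciSup hc₀.le hC₀.le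
    (hw.bddAbove_delta_div hf (by positivity)) fun h =>
      delta_sub_Fmean hp hf.1 hK h.1 r ▸
        mul_div_le_div_and_div_le_mul_div (rpow_pos_of_pos h.2 α).le
          (hequiv (delta h.1 r f) (hf.1.delta h.1 r) n hn)
  have hbase := hequiv f hf.1 n hn
  simp only [holderNorm, holderSemi, wHolder, mul_add]
  exact ⟨add_le_add hbase.1 hsemi.1, add_le_add hbase.2 hsemi.2⟩

/-- Theorem 4.2: strong converse inequality in `H_p^{r,α}`, `1 ≤ p ≤ ∞`,
for Fourier means. -/
theorem strong_converse_fourier (p : ℝ≥0∞) (hp : 1 ≤ p) (r : ℕ) (hr : 0 < r)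
    (α : ℝ) (hα0 : 0 < α) (hαr : α ≤ (r : ℝ))
    (K : ℕ → ℝ → ℂ) (hK : IsKernel K)
    (hbdd : ∃ B : ℝ, ∀ n : ℕ, 0 < n → ∀ f : ℝ → ℂ, MemLp' p f →
      LpNorm p (Fmean K n f) ≤ B * LpNorm p f)
    (w : (ℝ → ℂ) → ℝ → ℝ) (hw : IsOmegaClass p w)
    (hequiv : ∃ c₀ > (0:ℝ), ∃ C₀ > (0:ℝ), ∀ f : ℝ → ℂ, MemLp' p f → ∀ n : ℕ, 0 < n →
      c₀ * w f (1 / (n : ℝ)) ≤ LpNorm p (fun x => f x - Fmean K n f x) ∧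
        LpNorm p (fun x => f x - Fmean K n f x) ≤ C₀ * w f (1 / (n : ℝ))) :
    ∃ c > (0:ℝ), ∃ C > (0:ℝ), ∀ f : ℝ → ℂ, MemHolderSp p r α f → ∀ n : ℕ, 0 < n →
      c * wHolder w r α f (1 / (n : ℝ)) ≤
          holderNorm p r α (fun x => f x - Fmean K n f x) ∧
        holderNorm p r α (fun x => f x - Fmean K n f x) ≤
          C * wHolder w r α f (1 / (n : ℝ)) :=
  strong_converse_fourier_general p hp r α K hK w hw hequiv
end
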